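/- arXiv:1909.02078 — 3 statements merged into one kernel-verified Lean document; each statement's English description precedes it below -/
import Mathlib

section
/- Let 𝒞 be a ℂ-linear subspace of the functions D → ℂ invariant under complex conjugation. Then 𝒞 is complex conjugate phase retrieval if and only if there do not exist u, v ∈ 𝒞 such that Re(u(x)·conj(v(x))) = 0 for all x ∈ D and Re(u(x)·conj(v(y)) + u(y)·conj(v(x))) ≠ 0 for some x, y ∈ D. -/
/-!
If `Re (u x * conj (v x)) = 0` for all `x`, then `F = u + v` and `G = u - v` have the same
modulus, and conversely `u = f + g`, `v = f - g` is such a pair whenever `|f| = |g|`. By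
polarization, `Re (u x * conj (v y) + u y * conj (v x))` vanishes for all `x, y` exactly when
`Re (F x * conj (F y)) = Re (G x * conj (G y))`. So the condition says that functions of `C`
with the same modulus have the same real parts `Re (g x * conj (g y))`, and these determine `g`
up to a unimodular factor and conjugation: each product `g x * conj (g y)` is `f x * conj (f y)`
or its conjugate, and the choice is the same for all pairs because the relation can be
transported through a point where `f` does not vanish.
-/

open Complex ComplexConjugate

namespace Complex

lemma eq_or_eq_conj_of_re_eq_of_norm_eq {w₁ w₂ : ℂ} (hre : w₁.re = w₂.re)
    (hnorm : ‖w₁‖ = ‖w₂‖) : w₁ = w₂ ∨ w₁ = conj w₂ := by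
  have hsq : normSq w₁ = normSq w₂ := by rw [← Complex.sq_norm, ← Complex.sq_norm, hnorm]
  rw [normSq_apply, normSq_apply, hre] at hsq
  rcases sq_eq_sq_iff_eq_or_eq_neg.mp (by linarith : w₁.im ^ 2 = w₂.im ^ 2) with him | him
  · exact Or.inl (ext hre him)
  · exact Or.inr (ext (by simpa using hre) (by simpa using him))

lemma mul_conj_eq_of_mul_conj_eq_of_mul_conj_eq {a b c a' b' c' : ℂ} (hb' : b' ≠ 0)
    (hb : ‖b‖ = ‖b'‖) (hab : a * conj b = a' * conj b') (hbc : b * conj c = b' * conj c') :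
    a * conj c = a' * conj c' := by
  have hN : (normSq b' : ℂ) ≠ 0 := by exact_mod_cast (normSq_pos.mpr hb').ne'
  have hbb' : normSq b = normSq b' := by rw [← Complex.sq_norm, ← Complex.sq_norm, hb]
  refine mul_right_cancel₀ hN ?_
  calc a * conj c * normSq b' = a * conj b * (b * conj c) := by
        rw [← hbb', ← mul_conj]; ring
    _ = a' * conj b' * (b' * conj c') := by rw [hab, hbc]
    _ = a' * conj c' * normSq b' := by rw [← mul_conj]; ring

lemma mul_mul_conj_mul {z : ℂ} (hz : ‖z‖ = 1) (a b : ℂ) :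
    z * a * conj (z * b) = a * conj b := by
  have : z * conj z = 1 := by rw [mul_conj, ← Complex.sq_norm, hz]; norm_num
  rw [map_mul]; linear_combination (a * conj b) * this

lemma re_add_mul_conj_add_sub_re_sub_mul_conj_sub (a b c d : ℂ) :
    ((a + b) * conj (c + d)).re - ((a - b) * conj (c - d)).re
      = 2 * (a * conj d + c * conj b).re := by
  simp only [mul_re, add_re, add_im, sub_re, sub_im, conj_re, conj_im]
  ring

lemma re_add_mul_conj_sub_add_re_add_mul_conj_sub (a b c d : ℂ) :
    ((a + b) * conj (c - d) + (c + d) * conj (a - b)).re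
      = 2 * ((a * conj c).re - (b * conj d).re) := by
  simp only [mul_re, add_re, add_im, sub_re, sub_im, conj_re, conj_im]
  ring

end Complex

section PhaseRetrieval

variable {D : Type*}

lemma exists_eq_mul_of_mul_conj_eq {f g : D → ℂ} {p : D} (hp : f p ≠ 0)
    (hnorm : ‖g p‖ = ‖f p‖) (h : ∀ x, g x * conj (g p) = f x * conj (f p)) :
    ∃ z : ℂ, ‖z‖ = 1 ∧ g = fun x => z * f x := by
  have hgp : conj (g p) ≠ 0 := by
    rwa [map_ne_zero, ← norm_ne_zero_iff, hnorm, norm_ne_zero_iff]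
  refine ⟨conj (f p) / conj (g p), by simp [hnorm, hp], funext fun x => ?_⟩
  rw [div_mul_eq_mul_div, eq_div_iff hgp, h x, mul_comm (conj (f p))]

lemma re_mul_conj_eq_of_eq_mul_or_eq_mul_conj {f g : D → ℂ}
    (hg : (∃ z : ℂ, ‖z‖ = 1 ∧ g = fun x => z * f x) ∨
      ∃ z : ℂ, ‖z‖ = 1 ∧ g = fun x => z * conj (f x)) (x y : D) :
    (g x * conj (g y)).re = (f x * conj (f y)).re := by
  rcases hg with ⟨z, hz, rfl⟩ | ⟨z, hz, rfl⟩
  · rw [mul_mul_conj_mul hz]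
  · rw [mul_mul_conj_mul hz]
    simp only [mul_re, conj_re, conj_im]
    ring

theorem exists_eq_mul_or_eq_mul_conj_of_re_mul_conj_eq {f g : D → ℂ}
    (hnorm : ∀ x, ‖g x‖ = ‖f x‖)
    (hre : ∀ x y, (g x * conj (g y)).re = (f x * conj (f y)).re) :
    (∃ z : ℂ, ‖z‖ = 1 ∧ g = fun x => z * f x) ∨
      ∃ z : ℂ, ‖z‖ = 1 ∧ g = fun x => z * conj (f x) := by
  have hzero : ∀ x, f x = 0 → g x = 0 := fun x hx => by simpa [hx] using hnorm x
  have hcases : ∀ x y, g x * conj (g y) = f x * conj (f y) ∨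
      g x * conj (g y) = conj (f x) * conj (conj (f y)) := fun x y => by
    simpa using eq_or_eq_conj_of_re_eq_of_norm_eq (hre x y) (by simp [hnorm])
  by_cases hf : ∀ x, f x = 0
  · exact Or.inl ⟨1, norm_one, funext fun x => by simp [hf x, hzero x (hf x)]⟩
  push Not at hf
  obtain ⟨p, hp⟩ := hf
  by_cases hA : ∀ x, g x * conj (g p) = f x * conj (f p)
  · exact Or.inl (exists_eq_mul_of_mul_conj_eq hp (hnorm p) hA)
  by_cases hB : ∀ x, g x * conj (g p) = conj (f x) * conj (conj (f p))
  · exact Or.inr (exists_eq_mul_of_mul_conj_eq (f := fun x => conj (f x)) (by simpa)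
      (by simpa using hnorm p) hB)
  push Not at hA hB
  obtain ⟨y, hy⟩ := hA
  obtain ⟨x, hx⟩ := hB
  have hfx : f x ≠ 0 := fun h0 => hx (by simp [h0, hzero x h0])
  have hfy : f y ≠ 0 := fun h0 => hy (by simp [h0, hzero y h0])
  -- `x` agrees with `f` and `y` with `conj ∘ f` relative to `p`, so the pair `(x, y)` can agree
  -- with neither.
  exfalso
  rcases hcases x y with hxy | hxy
  · refine hy (mul_conj_eq_of_mul_conj_eq_of_mul_conj_eq hfx (hnorm x) ?_
      ((hcases x p).resolve_right hx))
    simpa [mul_comm] using congrArg conj hxy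
  · exact hx (mul_conj_eq_of_mul_conj_eq_of_mul_conj_eq (by simpa using hfy)
      (by simpa using hnorm y) hxy ((hcases y p).resolve_left hy))

end PhaseRetrieval

theorem stmt_1_general {D : Type*} (C : Submodule ℂ (D → ℂ))
    (hconj : ∀ f ∈ C, (fun x => (starRingEnd ℂ) (f x)) ∈ C) :
    (∀ f ∈ C,
      {g : D → ℂ | g ∈ C ∧ ∀ x, ‖g x‖ = ‖f x‖} =
        {g : D → ℂ | ∃ z : ℂ, ‖z‖ = 1 ∧ g = fun x => z * f x} ∪
        {g : D → ℂ | ∃ z : ℂ, ‖z‖ = 1 ∧ g = fun x => z * (starRingEnd ℂ) (f x)}) ↔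
      ¬ ∃ u ∈ C, ∃ v ∈ C,
          (∀ x, (u x * (starRingEnd ℂ) (v x)).re = 0) ∧
          (∃ x y, (u x * (starRingEnd ℂ) (v y) + u y * (starRingEnd ℂ) (v x)).re ≠ 0) := by
  constructor
  · rintro hccpr ⟨u, hu, v, hv, hperp, x, y, hxy⟩
    have hnorm : ∀ t, ‖(u - v) t‖ = ‖(u + v) t‖ := fun t => norm_sub_eq_norm_add (hperp t)
    have hmem : u - v ∈ {g : D → ℂ | g ∈ C ∧ ∀ x, ‖g x‖ = ‖(u + v) x‖} :=
      ⟨C.sub_mem hu hv, hnorm⟩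
    rw [hccpr _ (C.add_mem hu hv)] at hmem
    apply hxy
    have hre := re_mul_conj_eq_of_eq_mul_or_eq_mul_conj hmem x y
    have hpol := re_add_mul_conj_add_sub_re_sub_mul_conj_sub (u x) (v x) (u y) (v y)
    simp only [Pi.add_apply, Pi.sub_apply] at hre
    linarith
  · intro hbad f hf
    ext g
    refine ⟨fun ⟨hg, hnorm⟩ =>
      exists_eq_mul_or_eq_mul_conj_of_re_mul_conj_eq hnorm fun x y => ?_, ?_⟩
    · push Not at hbad
      have hsum := hbad (f + g) (C.add_mem hf hg) (f - g) (C.sub_mem hf hg)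
        (fun t => (real_inner_comm _ _).trans
          ((real_inner_add_sub_eq_zero_iff _ _).mpr (hnorm t).symm)) x y
      have hpol := re_add_mul_conj_sub_add_re_add_mul_conj_sub (f x) (g x) (f y) (g y)
      simp only [Pi.add_apply, Pi.sub_apply] at hsum
      linarith
    · rintro (⟨z, hz, rfl⟩ | ⟨z, hz, rfl⟩)
      · exact ⟨C.smul_mem z hf, fun x => by simp [hz]⟩
      · exact ⟨C.smul_mem z (hconj f hf), fun x => by simp [hz]⟩

/-- **Theorem 2.2 (complex conjugate phase retrieval of the space).**
Let `C` be a ℂ-linear subspace of functions `D → ℂ` invariant under complex conjugation.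
Then `C` is complex conjugate phase retrieval if and only if there do not exist
`u, v ∈ C` with `Re (u x * conj (v x)) = 0` for all `x` and
`Re (u x * conj (v y) + u y * conj (v x)) ≠ 0` for some `x, y`. -/
theorem stmt_1 {D : Type*} [Nonempty D] (C : Submodule ℂ (D → ℂ))
    (hconj : ∀ f ∈ C, (fun x => (starRingEnd ℂ) (f x)) ∈ C) :
    (∀ f ∈ C,
      {g : D → ℂ | g ∈ C ∧ ∀ x, ‖g x‖ = ‖f x‖} =
        {g : D → ℂ | ∃ z : ℂ, ‖z‖ = 1 ∧ g = fun x => z * f x} ∪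
        {g : D → ℂ | ∃ z : ℂ, ‖z‖ = 1 ∧ g = fun x => z * (starRingEnd ℂ) (f x)}) ↔
      ¬ ∃ u ∈ C, ∃ v ∈ C,
          (∀ x, (u x * (starRingEnd ℂ) (v x)).re = 0) ∧
          (∃ x y, (u x * (starRingEnd ℂ) (v y) + u y * (starRingEnd ℂ) (v x)).re ≠ 0) :=
  stmt_1_general C hconj
end

section
/- Let A be a real m×n matrix of rank n with rows a₁ᵀ, …, a_mᵀ. Then the complex range space R_ℂ(A) is complex conjugate phase retrieval if and only if there does not exist a real n×n matrix X of rank at most 2 such that Xᵀ ≠ −X and Tr(a_i a_iᵀ X) = a_iᵀ X a_i = 0 for all 1 ≤ i ≤ m. -/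
/-!
For `x y : n → ℂ` the real matrix `X = Re ((y + x) (y - x)ᴴ)` has rank at most `2` and
satisfies `aᵀ X a = |aᵀ y|² - |aᵀ x|²` for every real `a`; conversely, every real matrix of rank at
most `2` is of this form. The symmetric part `X + Xᵀ` equals `2 (Re (y yᴴ) - Re (x xᴴ))`, and
`Re (y yᴴ) = Re (x xᴴ)` holds exactly when `y = z x` or `y = z x̄` with `|z| = 1`. Hence a pair
`x, y` with equal measurements `|aᵢᵀ x| = |aᵢᵀ y|` that is not equivalent up to a unimodular factor
and conjugation is the same thing as a non-skew-symmetric `X` of rank at most `2` with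
`aᵢᵀ X aᵢ = 0`. Since `A` has full column rank, `x ↦ A x` is injective on `ℂⁿ`, so this
equivalence of `x` and `y` is the same as that of `A x` and `A y`.
-/

open Complex ComplexConjugate Matrix

namespace Complex

theorem eq_or_eq_conj_of_normSq_eq_of_re_eq {α β : ℂ} (hnorm : normSq β = normSq α)
    (hre : β.re = α.re) : β = α ∨ β = conj α := by
  have him : (β.im - α.im) * (β.im + α.im) = 0 := by
    rw [normSq_apply, normSq_apply, hre] at hnorm
    linear_combination hnorm
  rcases mul_eq_zero.1 him with h | h
  · exact .inl (Complex.ext hre (by linarith))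
  · exact .inr (Complex.ext hre (by rw [conj_im]; linarith))

theorem re_add_mul_conj_sub (s t : ℂ) :
    ((s + t) * conj (s - t)).re = normSq s - normSq t := by
  simp only [mul_re, conj_re, conj_im, add_re, add_im, sub_re, sub_im, normSq_apply]
  ring

end Complex

section

variable {ι m n : Type*}

theorem eq_or_eq_star_of_re_mul_conj_eq {w h : ι → ℂ}
    (hwh : ∀ j, w j = h j ∨ w j = conj (h j))
    (hre : ∀ j l, (w j * conj (w l)).re = (h j * conj (h l)).re) : w = h ∨ w = star h := by
  by_contra! hne
  obtain ⟨j, hj⟩ := Function.ne_iff.1 hne.1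
  obtain ⟨l, hl⟩ := Function.ne_iff.1 hne.2
  have hwj : w j = conj (h j) := (hwh j).resolve_left hj
  have hwl : w l = h l := (hwh l).resolve_right hl
  have himj : (h j).im ≠ 0 := fun h0 => hj (hwj.trans (conj_eq_iff_im.2 h0))
  have himl : (h l).im ≠ 0 := fun h0 => hl (hwl.trans (conj_eq_iff_im.2 h0).symm)
  -- `Re (conj a * conj b) = Re (a * conj b)` forces `Im a * Im b = 0`
  have := hre j l
  rw [hwj, hwl] at this
  simp only [mul_re, conj_re, conj_im] at this
  exact mul_ne_zero himj himl (by linarith)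

theorem exists_norm_eq_one_eq_smul_of_mul_eq_mul {y v : ι → ℂ} {c d : ℂ} (hc : c ≠ 0)
    (hcd : ‖c‖ = ‖d‖) (h : ∀ j, y j * c = v j * d) : ∃ z : ℂ, ‖z‖ = 1 ∧ y = z • v := by
  refine ⟨d / c, by rw [norm_div, hcd, div_self (hcd ▸ norm_ne_zero_iff.2 hc)], funext fun j => ?_⟩
  rw [Pi.smul_apply, smul_eq_mul, div_mul_eq_mul_div, eq_div_iff hc, h j, mul_comm]

theorem exists_eq_smul_or_eq_smul_star_of_re_mul_conj_eq {x y : ι → ℂ}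
    (h : ∀ i j, (y i * conj (y j)).re = (x i * conj (x j)).re) :
    ∃ z : ℂ, ‖z‖ = 1 ∧ (y = z • x ∨ y = z • star x) := by
  have hnormSq (i : ι) : normSq (y i) = normSq (x i) := by
    simpa only [mul_conj, ofReal_re] using h i i
  by_cases hx : x = 0
  · refine ⟨1, norm_one, .inl (funext fun i => ?_)⟩
    simpa [hx] using hnormSq i
  obtain ⟨k, hk⟩ := Function.ne_iff.1 hx
  have hyk : y k ≠ 0 := by
    rw [← normSq_pos, hnormSq]
    exact normSq_pos.2 hk
  have hnorm : ‖conj (y k)‖ = ‖conj (x k)‖ := by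
    simpa only [normSq_eq_norm_sq, norm_conj, sq_eq_sq₀ (norm_nonneg _) (norm_nonneg _)]
      using hnormSq k
  set w : ι → ℂ := fun j => y j * conj (y k)
  set g : ι → ℂ := fun j => x j * conj (x k)
  have hwg (j : ι) : w j = g j ∨ w j = conj (g j) :=
    eq_or_eq_conj_of_normSq_eq_of_re_eq (by simp [w, g, hnormSq]) (h j k)
  have hre (j l : ι) : (w j * conj (w l)).re = (g j * conj (g l)).re := by
    have key (v : ι → ℂ) : v j * conj (v k) * conj (v l * conj (v k)) =
        v j * conj (v l) * (normSq (v k) : ℂ) := by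
      rw [map_mul, conj_conj, ← mul_conj]; ring
    simp only [w, g, key, re_mul_ofReal, h j l, hnormSq k]
  rcases eq_or_eq_star_of_re_mul_conj_eq hwg hre with hw | hw
  · obtain ⟨z, hz, hyz⟩ := exists_norm_eq_one_eq_smul_of_mul_eq_mul (by simpa) hnorm (congrFun hw)
    exact ⟨z, hz, .inl hyz⟩
  · obtain ⟨z, hz, hyz⟩ := exists_norm_eq_one_eq_smul_of_mul_eq_mul (c := conj (y k))
      (v := star x) (d := x k) (by simpa) (by simpa using hnorm)
      (fun j => by simpa [w, g] using congrFun hw j)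
    exact ⟨z, hz, .inr hyz⟩

theorem map_re_vecMulVec_star_self_eq_iff {x y : ι → ℂ} :
    (vecMulVec y (star y)).map re = (vecMulVec x (star x)).map re ↔
      ∃ z : ℂ, ‖z‖ = 1 ∧ (y = z • x ∨ y = z • star x) := by
  refine ⟨fun h => exists_eq_smul_or_eq_smul_star_of_re_mul_conj_eq fun i j => congrFun₂ h i j, ?_⟩
  rintro ⟨z, hz, rfl | rfl⟩ <;> ext i j
  all_goals
    have hzz : z * conj z = 1 := by rw [mul_conj', hz]; simp
    simp only [map_apply, vecMulVec_apply, Pi.smul_apply, Pi.star_apply, star_def, smul_eq_mul,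
      map_mul, conj_conj]
  · rw [show z * x i * (conj z * conj (x j)) = z * conj z * (x i * conj (x j)) by ring, hzz,
      one_mul]
  · rw [show z * conj (x i) * (conj z * x j) = z * conj z * conj (x i * conj (x j)) by
      rw [map_mul, conj_conj]; ring, hzz, one_mul, conj_re]

theorem Matrix.exists_eq_mul_of_rank_le {K : Type*} [Field K] [Fintype n] {k : ℕ}
    {X : Matrix m n K} (h : X.rank ≤ k) :
    ∃ (B : Matrix m (Fin k) K) (C : Matrix (Fin k) n K), X = B * C := by
  classical
  obtain ⟨f, hf⟩ := finrank_le_iff_exists_linearMap.1 (h.trans_eq (Module.finrank_fin_fun K).symm)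
  obtain ⟨g, hg⟩ := f.exists_leftInverse_of_injective (LinearMap.ker_eq_bot.2 hf)
  refine ⟨LinearMap.toMatrix' ((LinearMap.range X.mulVecLin).subtype ∘ₗ g),
    LinearMap.toMatrix' (f ∘ₗ X.mulVecLin.rangeRestrict), ?_⟩
  rw [← LinearMap.toMatrix'_comp, LinearMap.comp_assoc, ← LinearMap.comp_assoc _ f g, hg,
    LinearMap.id_comp, LinearMap.rangeRestrict, LinearMap.subtype_comp_codRestrict,
    ← toLin'_apply', LinearMap.toMatrix'_toLin']

theorem map_re_vecMulVec_star_eq_mul (u : m → ℂ) (v : n → ℂ) :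
    (vecMulVec u (star v)).map re = (of ![re ∘ u, im ∘ u])ᵀ * of ![re ∘ v, im ∘ v] := by
  ext i j
  simp [mul_apply, Fin.sum_univ_two, vecMulVec_apply]

theorem rank_map_re_vecMulVec_star_le [Fintype n] (u : m → ℂ) (v : n → ℂ) :
    ((vecMulVec u (star v)).map re).rank ≤ 2 := by
  rw [map_re_vecMulVec_star_eq_mul]
  exact (rank_mul_le_right _ _).trans ((rank_le_card_height _).trans_eq (Fintype.card_fin 2))

theorem exists_map_re_vecMulVec_star_eq_of_rank_le_two [Fintype n] {X : Matrix m n ℝ}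
    (h : X.rank ≤ 2) : ∃ (u : m → ℂ) (v : n → ℂ), X = (vecMulVec u (star v)).map re := by
  obtain ⟨B, C, rfl⟩ := exists_eq_mul_of_rank_le h
  refine ⟨fun i => ⟨B i 0, B i 1⟩, fun j => ⟨C 0 j, C 1 j⟩, ?_⟩
  ext i j
  simp [mul_apply, Fin.sum_univ_two, vecMulVec_apply]

theorem dotProduct_mulVec_map_re_vecMulVec_star [Fintype n] (a : n → ℝ) (u v : n → ℂ) :
    a ⬝ᵥ (vecMulVec u (star v)).map re *ᵥ a =
      (((ofReal ∘ a) ⬝ᵥ u) * conj ((ofReal ∘ a) ⬝ᵥ v)).re := by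
  simp only [dotProduct, mulVec, Function.comp_apply]
  rw [map_sum, Finset.sum_mul_sum, re_sum]
  simp only [Finset.mul_sum, re_sum]
  refine Finset.sum_congr rfl fun i _ => Finset.sum_congr rfl fun j _ => ?_
  simp only [map_apply, vecMulVec_apply, Pi.star_apply, star_def, map_mul, conj_ofReal, mul_re,
    mul_im, ofReal_re, ofReal_im, conj_re, conj_im]
  ring

def intensityDiffMatrix (x y : n → ℂ) : Matrix n n ℝ :=
  (vecMulVec (y + x) (star (y - x))).map re

theorem dotProduct_mulVec_intensityDiffMatrix [Fintype n] (x y : n → ℂ) (a : n → ℝ) :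
    a ⬝ᵥ intensityDiffMatrix x y *ᵥ a =
      normSq ((ofReal ∘ a) ⬝ᵥ y) - normSq ((ofReal ∘ a) ⬝ᵥ x) := by
  rw [intensityDiffMatrix, dotProduct_mulVec_map_re_vecMulVec_star, dotProduct_add,
    dotProduct_sub, re_add_mul_conj_sub]

theorem intensityDiffMatrix_add_transpose (x y : n → ℂ) :
    intensityDiffMatrix x y + (intensityDiffMatrix x y)ᵀ =
      (2 : ℝ) • ((vecMulVec y (star y)).map re - (vecMulVec x (star x)).map re) := by
  ext i j
  simp only [intensityDiffMatrix, Matrix.add_apply, transpose_apply, map_apply, vecMulVec_apply,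
    Matrix.smul_apply, Matrix.sub_apply, Pi.add_apply, Pi.sub_apply, Pi.star_apply, star_def,
    mul_re, conj_re, conj_im, add_re, add_im, sub_re, sub_im, smul_eq_mul]
  ring

theorem transpose_intensityDiffMatrix_eq_neg_iff {x y : n → ℂ} :
    (intensityDiffMatrix x y)ᵀ = -intensityDiffMatrix x y ↔
      (vecMulVec y (star y)).map re = (vecMulVec x (star x)).map re := by
  rw [eq_neg_iff_add_eq_zero, add_comm, intensityDiffMatrix_add_transpose, smul_eq_zero,
    sub_eq_zero]
  simp

theorem exists_intensityDiffMatrix_eq_of_rank_le_two [Fintype n] {X : Matrix n n ℝ}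
    (h : X.rank ≤ 2) : ∃ x y : n → ℂ, X = intensityDiffMatrix x y := by
  obtain ⟨u, v, rfl⟩ := exists_map_re_vecMulVec_star_eq_of_rank_le_two h
  refine ⟨(2⁻¹ : ℂ) • (u - v), (2⁻¹ : ℂ) • (u + v), ?_⟩
  rw [intensityDiffMatrix]
  congr 3 <;> module

theorem Matrix.mulVec_injective_of_rank_eq_card {K : Type*} [Field K] [Fintype n]
    {A : Matrix m n K} (hA : A.rank = Fintype.card n) : Function.Injective A.mulVec := by
  have h := LinearMap.finrank_range_add_finrank_ker A.mulVecLin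
  rw [Module.finrank_fintype_fun_eq_card, ← Matrix.rank, hA, add_eq_left,
    Submodule.finrank_eq_zero] at h
  exact LinearMap.ker_eq_bot.1 h

theorem Matrix.mulVec_map_ofReal_injective [Fintype n] {A : Matrix m n ℝ}
    (hA : Function.Injective A.mulVec) : Function.Injective (A.map ofReal).mulVec := by
  intro v w hvw
  have hre : A *ᵥ (re ∘ v) = A *ᵥ (re ∘ w) := by
    ext i
    simpa [mulVec, dotProduct, re_sum] using congrArg re (congrFun hvw i)
  have him : A *ᵥ (im ∘ v) = A *ᵥ (im ∘ w) := by
    ext i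
    simpa [mulVec, dotProduct, im_sum] using congrArg im (congrFun hvw i)
  exact funext fun j => Complex.ext (congrFun (hA hre) j) (congrFun (hA him) j)

theorem Matrix.mulVec_map_ofReal_apply [Fintype n] (A : Matrix m n ℝ) (v : n → ℂ) (i : m) :
    (A.map ofReal *ᵥ v) i = (ofReal ∘ A i) ⬝ᵥ v :=
  rfl

end

/-- **Corollary 2.4 (complex conjugate phase retrieval of the complex range space).**
Let `A` be a real `m × n` matrix of rank `n` with rows `aᵢ`.  The complex range space
`R_ℂ(A)` is complex conjugate phase retrieval iff there does not exist a real `n × n`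
matrix `X` of rank at most `2` with `Xᵀ ≠ -X` and `aᵢᵀ X aᵢ = 0` for all `i`. -/
theorem stmt_3 {m n : ℕ} (A : Matrix (Fin m) (Fin n) ℝ) (hA : A.rank = n) :
    (∀ xf y : Fin n → ℂ,
        (∀ i, ‖(A.map (Complex.ofReal)).mulVec y i‖ =
          ‖(A.map (Complex.ofReal)).mulVec xf i‖) →
        ∃ z : ℂ, ‖z‖ = 1 ∧
          ((A.map (Complex.ofReal)).mulVec y = z • (A.map (Complex.ofReal)).mulVec xf ∨
            (A.map (Complex.ofReal)).mulVec y = z • (A.map (Complex.ofReal)).mulVec (star xf))) ↔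
      ¬ ∃ X : Matrix (Fin n) (Fin n) ℝ,
          X.rank ≤ 2 ∧ Xᵀ ≠ -X ∧ (∀ i, A i ⬝ᵥ X.mulVec (A i) = 0) := by
  have hinj : Function.Injective (A.map ofReal).mulVec :=
    mulVec_map_ofReal_injective (mulVec_injective_of_rank_eq_card (by rwa [Fintype.card_fin]))
  have hmeas (x y : Fin n → ℂ) :
      (∀ i, ‖(A.map ofReal *ᵥ y) i‖ = ‖(A.map ofReal *ᵥ x) i‖) ↔
        ∀ i, A i ⬝ᵥ intensityDiffMatrix x y *ᵥ A i = 0 := by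
    refine forall_congr' fun i => ?_
    rw [dotProduct_mulVec_intensityDiffMatrix, sub_eq_zero, normSq_eq_norm_sq, normSq_eq_norm_sq,
      sq_eq_sq₀ (norm_nonneg _) (norm_nonneg _), mulVec_map_ofReal_apply, mulVec_map_ofReal_apply]
  have hphase (x y : Fin n → ℂ) :
      (∃ z : ℂ, ‖z‖ = 1 ∧ (A.map ofReal *ᵥ y = z • A.map ofReal *ᵥ x ∨
        A.map ofReal *ᵥ y = z • A.map ofReal *ᵥ star x)) ↔
        (intensityDiffMatrix x y)ᵀ = -intensityDiffMatrix x y := by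
    simp only [transpose_intensityDiffMatrix_eq_neg_iff, map_re_vecMulVec_star_self_eq_iff,
      ← mulVec_smul, hinj.eq_iff]
  constructor
  · rintro hPR ⟨X, hrank, hskew, hrows⟩
    obtain ⟨x, y, rfl⟩ := exists_intensityDiffMatrix_eq_of_rank_le_two hrank
    exact hskew ((hphase x y).1 (hPR x y ((hmeas x y).2 hrows)))
  · intro hnX x y hxy
    by_contra hPR
    exact hnX ⟨_, rank_map_re_vecMulVec_star_le _ _, mt (hphase x y).2 hPR, (hmeas x y).1 hxy⟩
end

section
/- Let h(t) = max(1 − |t|, 0) be the hat function and let f = ∑_{k∈ℤ} c(k)·h(· − k) be a nonzero function in S_ℂ(h), where c : ℤ → ℂ. Set K₋ = inf{k ∈ ℤ : c(k) ≠ 0} and K₊ = sup{k ∈ ℤ : c(k) ≠ 0} (possibly ±∞). Then f is complex conjugate phase retrieval in S_ℂ(h) if and only if (i) c(k) ≠ 0 for every integer k with K₋ − 1 < k < K₊ + 1 (i.e. the support of c is an interval of integers), and (ii) there exists at most one integer k with K₋ − 1 < k < K₊ such that Im(c(k)·conj(c(k+1))) ≠ 0. -/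
/-!
On `[n, n + 1]` the function `f = ∑ c k • h(· - k)` interpolates `c n` and `c (n + 1)` linearly,
so `|f|²` is there a quadratic polynomial with coefficients `|c n|²`, `|c (n + 1)|²` and
`Re (c n * conj (c (n + 1)))`. Hence `|g| = |f|` for `g = ∑ d k • h(· - k)` exactly when `d` and `c`
have the same moduli and each `w' n = d n * conj (d (n + 1))` equals `w n = c n * conj (c (n + 1))`
or its conjugate. Along a run of nonzero coefficients, `w' = w` forces `d / c` to be constant, and
`w' = conj w` forces `d / conj c` to be constant; if at most one `w n` is non-real, one of the two
choices fits every `n`, so `g = z f` or `g = z f̄`.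

Conversely, past a zero `c k` lying between nonzero coefficients the tail of `c` can be rotated by
an arbitrary unimodular factor, and past a non-real `w a` the tail can be conjugated (and rotated
to keep `c (a + 1)`); if a second non-real `w b` exists, the resulting `g` is neither a rotation
of `f` nor one of `f̄`.
-/

open Complex

/-- The hat function `h(t) = max (1 - |t|) 0`. -/
noncomputable def hatFun (t : ℝ) : ℝ := max (1 - |t|) 0

/-- The function `∑_{k ∈ ℤ} c k · h(· - k)` in the complex shift-invariant space
`S_ℂ(h)` generated by the hat function.  At every `t` at most two summands are nonzero,
so the (absolutely convergent) `tsum` coincides with the pointwise finite sum. -/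
noncomputable def sisFun (c : ℤ → ℂ) : ℝ → ℂ :=
  fun t => ∑' k : ℤ, c k * (hatFun (t - k) : ℂ)

open ComplexConjugate

lemma hatFun_of_abs_le_one {t : ℝ} (ht : |t| ≤ 1) : hatFun t = 1 - |t| :=
  max_eq_left (by linarith)

lemma hatFun_of_one_le_abs {t : ℝ} (ht : 1 ≤ |t|) : hatFun t = 0 :=
  max_eq_right (by linarith)

lemma sisFun_intCast_add (c : ℤ → ℂ) (n : ℤ) {s : ℝ} (hs₀ : 0 ≤ s) (hs₁ : s ≤ 1) :
    sisFun c (n + s) = c n * (1 - s) + c (n + 1) * s := by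
  have hzero : ∀ k ∉ ({n, n + 1} : Finset ℤ), c k * (hatFun (n + s - k) : ℂ) = 0 := by
    intro k hk
    simp only [Finset.mem_insert, Finset.mem_singleton] at hk
    have : 1 ≤ |(n : ℝ) + s - k| := by
      rcases (by omega : k ≤ n - 1 ∨ n + 2 ≤ k) with hk' | hk'
      · have : (k : ℝ) ≤ n - 1 := by exact_mod_cast hk'
        exact le_abs.mpr (Or.inl (by linarith))
      · have : (n : ℝ) + 2 ≤ k := by exact_mod_cast hk'
        exact le_abs.mpr (Or.inr (by linarith))
    simp [hatFun_of_one_le_abs this]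
  have h₀ : hatFun (n + s - n) = 1 - s := by
    rw [add_sub_cancel_left, hatFun_of_abs_le_one (by rwa [abs_of_nonneg hs₀]),
      abs_of_nonneg hs₀]
  have h₁ : hatFun (n + s - ↑(n + 1)) = s := by
    rw [Int.cast_add, Int.cast_one, show (n : ℝ) + s - (n + 1) = s - 1 by ring,
      hatFun_of_abs_le_one (by rw [abs_of_nonpos (by linarith)]; linarith),
      abs_of_nonpos (by linarith)]
    ring
  rw [sisFun, tsum_eq_sum hzero, Finset.sum_pair (by omega), h₀, h₁]
  push_cast
  ring

lemma sisFun_intCast (c : ℤ → ℂ) (n : ℤ) : sisFun c n = c n := by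
  simpa using sisFun_intCast_add c n le_rfl zero_le_one

lemma sisFun_apply (c : ℤ → ℂ) (t : ℝ) :
    sisFun c t = c ⌊t⌋ * (1 - Int.fract t) + c (⌊t⌋ + 1) * Int.fract t := by
  conv_lhs => rw [← Int.floor_add_fract t]
  exact sisFun_intCast_add c _ (Int.fract_nonneg t) (Int.fract_lt_one t).le

lemma sisFun_injective : Function.Injective sisFun := fun c d h =>
  funext fun n => by simpa only [sisFun_intCast] using congrFun h n

lemma sisFun_mul_left (z : ℂ) (c : ℤ → ℂ) :
    sisFun (fun k => z * c k) = fun t => z * sisFun c t := by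
  funext t
  simp only [sisFun_apply]
  ring

lemma sisFun_conj (c : ℤ → ℂ) :
    sisFun (fun k => conj (c k)) = fun t => conj (sisFun c t) := by
  funext t
  simp [sisFun_apply]

lemma sq_norm_sisFun_intCast_add (c : ℤ → ℂ) (n : ℤ) {s : ℝ} (hs₀ : 0 ≤ s) (hs₁ : s ≤ 1) :
    ‖sisFun c (n + s)‖ ^ 2 = ‖c n‖ ^ 2 * (1 - s) ^ 2 + ‖c (n + 1)‖ ^ 2 * s ^ 2
      + 2 * (1 - s) * s * (c n * conj (c (n + 1))).re := by
  rw [sisFun_intCast_add c n hs₀ hs₁, Complex.sq_norm, normSq_add]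
  simp only [← Complex.ofReal_one, ← Complex.ofReal_sub, normSq_ofReal, map_mul,
    conj_ofReal, Complex.sq_norm]
  rw [show c n * ((1 - s : ℝ) : ℂ) * (conj (c (n + 1)) * (s : ℂ))
      = ((1 - s) * s : ℝ) * (c n * conj (c (n + 1))) by push_cast; ring, re_ofReal_mul]
  ring

structure PhaselessEquiv (d c : ℤ → ℂ) : Prop where
  norm_eq : ∀ k, ‖d k‖ = ‖c k‖
  re_mul_conj_eq : ∀ k, (d k * conj (d (k + 1))).re = (c k * conj (c (k + 1))).re

lemma norm_sisFun_eq_iff (c d : ℤ → ℂ) :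
    (∀ t, ‖sisFun d t‖ = ‖sisFun c t‖) ↔ PhaselessEquiv d c := by
  constructor
  · intro h
    have hnorm k : ‖d k‖ = ‖c k‖ := by simpa only [sisFun_intCast] using h k
    refine ⟨hnorm, fun k => ?_⟩
    have hmid := congrArg (· ^ 2) (h (k + 1 / 2))
    simp only [sq_norm_sisFun_intCast_add _ k (by norm_num : (0 : ℝ) ≤ 1 / 2) (by norm_num),
      hnorm] at hmid
    linarith
  · intro h t
    rw [← Int.floor_add_fract t, ← sq_eq_sq₀ (norm_nonneg _) (norm_nonneg _),
      sq_norm_sisFun_intCast_add _ _ (Int.fract_nonneg t) (Int.fract_lt_one t).le,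
      sq_norm_sisFun_intCast_add _ _ (Int.fract_nonneg t) (Int.fract_lt_one t).le,
      h.norm_eq, h.norm_eq, h.re_mul_conj_eq]

def IsConjPhaseRetrieval (c : ℤ → ℂ) : Prop :=
  ∀ d : ℤ → ℂ, (∀ t : ℝ, ‖sisFun d t‖ = ‖sisFun c t‖) →
    ∃ z : ℂ, ‖z‖ = 1 ∧
      ((sisFun d = fun t => z * sisFun c t) ∨ (sisFun d = fun t => z * conj (sisFun c t)))

lemma isConjPhaseRetrieval_iff (c : ℤ → ℂ) :
    IsConjPhaseRetrieval c ↔ ∀ d, PhaselessEquiv d c →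
      ∃ z : ℂ, ‖z‖ = 1 ∧ ((∀ k, d k = z * c k) ∨ ∀ k, d k = z * conj (c k)) := by
  have hlin (e d : ℤ → ℂ) (z : ℂ) :
      (sisFun d = fun t => z * sisFun e t) ↔ ∀ k, d k = z * e k := by
    rw [← sisFun_mul_left, sisFun_injective.eq_iff, funext_iff]
  have hconj (d : ℤ → ℂ) (z : ℂ) :
      (sisFun d = fun t => z * conj (sisFun c t)) ↔ ∀ k, d k = z * conj (c k) := by
    simpa only [sisFun_conj] using hlin (fun k => conj (c k)) d z
  simp only [IsConjPhaseRetrieval, norm_sisFun_eq_iff, hlin, hconj]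

lemma eq_or_eq_conj_of_norm_eq_of_re_eq {w' w : ℂ} (hn : ‖w'‖ = ‖w‖) (hre : w'.re = w.re) :
    w' = w ∨ w' = conj w := by
  have him : w'.im ^ 2 = w.im ^ 2 := by rw [← sq_norm_sub_sq_re, ← sq_norm_sub_sq_re, hn, hre]
  rcases sq_eq_sq_iff_eq_or_eq_neg.mp him with him | him
  · exact Or.inl (Complex.ext hre him)
  · exact Or.inr (Complex.ext hre (by rw [him, conj_im]))

lemma PhaselessEquiv.mul_conj_eq_or {d c : ℤ → ℂ} (h : PhaselessEquiv d c) (k : ℤ) :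
    d k * conj (d (k + 1)) = c k * conj (c (k + 1)) ∨
      d k * conj (d (k + 1)) = conj (c k * conj (c (k + 1))) :=
  eq_or_eq_conj_of_norm_eq_of_re_eq (by simp only [norm_mul, norm_conj, h.norm_eq])
    (h.re_mul_conj_eq k)

lemma forall_eq_or_forall_eq_conj {w' w : ℤ → ℂ} (h : ∀ k, w' k = w k ∨ w' k = conj (w k))
    (hw : {k | (w k).im ≠ 0}.Subsingleton) :
    (∀ k, w' k = w k) ∨ ∀ k, w' k = conj (w k) := by
  by_cases hreal : ∀ k, (w k).im = 0
  · refine Or.inl fun k => ?_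
    rcases h k with hk | hk
    · exact hk
    · rw [hk, conj_eq_iff_im.mpr (hreal k)]
  push Not at hreal
  obtain ⟨k₀, hk₀⟩ := hreal
  have hother : ∀ k ≠ k₀, conj (w k) = w k := fun k hk =>
    conj_eq_iff_im.mpr (by_contra fun hk' => hk (hw hk' hk₀))
  rcases h k₀ with h₀ | h₀
  · refine Or.inl fun k => ?_
    rcases eq_or_ne k k₀ with rfl | hk
    · exact h₀
    · rcases h k with h' | h'
      · exact h'
      · rw [h', hother k hk]
  · refine Or.inr fun k => ?_
    rcases eq_or_ne k k₀ with rfl | hk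
    · exact h₀
    · rcases h k with h' | h'
      · rw [h', hother k hk]
      · exact h'

lemma mul_eq_mul_of_mul_conj_eq {a b a' b' : ℂ} (hb : ‖b'‖ = ‖b‖) (hb₀ : b ≠ 0)
    (h : a' * conj b' = a * conj b) : b' * a = a' * b := by
  have hn : b' * conj b' = b * conj b := by rw [mul_conj', mul_conj', hb]
  refine mul_left_cancel₀ ((map_ne_zero conj).mpr hb₀) ?_
  linear_combination (-b') * h + a' * hn

lemma Set.OrdConnected.apply_eq_apply_of_succ {α : Type*} {s : Set ℤ} (hs : s.OrdConnected)
    {r : ℤ → α} (hr : ∀ k ∈ s, k + 1 ∈ s → r (k + 1) = r k) {i j : ℤ} (hi : i ∈ s)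
    (hj : j ∈ s) : r i = r j := by
  wlog hij : i ≤ j generalizing i j
  · exact (this hj hi (le_of_not_ge hij)).symm
  induction j, hij using Int.leInduction with
  | base => rfl
  | succ n hin ih =>
    have hn : n ∈ s := hs.out hi hj ⟨hin, by omega⟩
    rw [ih hn, hr n hn hj]

lemma exists_eq_unit_mul_of_mul_conj_eq {d e : ℤ → ℂ} (hn : ∀ k, ‖d k‖ = ‖e k‖)
    (hw : ∀ k, d k * conj (d (k + 1)) = e k * conj (e (k + 1)))
    (he : (Function.support e).OrdConnected) : ∃ z : ℂ, ‖z‖ = 1 ∧ ∀ k, d k = z * e k := by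
  have hzero : ∀ k, e k = 0 → d k = 0 := fun k hk => norm_eq_zero.mp (by rw [hn, hk, norm_zero])
  by_cases hsupp : ∃ k₀, e k₀ ≠ 0
  · obtain ⟨k₀, hk₀⟩ := hsupp
    have hratio : ∀ k, e k ≠ 0 → d k / e k = d k₀ / e k₀ := fun k hk =>
      he.apply_eq_apply_of_succ (r := fun k => d k / e k)
        (fun k hk hk₁ => (div_eq_div_iff hk₁ hk).mpr (mul_eq_mul_of_mul_conj_eq (hn _) hk₁ (hw k)))
        hk hk₀
    refine ⟨d k₀ / e k₀, by rw [norm_div, hn, div_self (norm_ne_zero_iff.mpr hk₀)], fun k => ?_⟩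
    by_cases hk : e k = 0
    · rw [hk, hzero k hk, mul_zero]
    · rw [← hratio k hk, div_mul_cancel₀ _ hk]
  · push Not at hsupp
    exact ⟨1, norm_one, fun k => by rw [hsupp k, hzero k (hsupp k), mul_zero]⟩

lemma PhaselessEquiv.exists_eq_unit_mul_or {d c : ℤ → ℂ} (h : PhaselessEquiv d c)
    (hc : (Function.support c).OrdConnected)
    (hw : {k | (c k * conj (c (k + 1))).im ≠ 0}.Subsingleton) :
    ∃ z : ℂ, ‖z‖ = 1 ∧ ((∀ k, d k = z * c k) ∨ ∀ k, d k = z * conj (c k)) := by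
  rcases forall_eq_or_forall_eq_conj h.mul_conj_eq_or hw with hw' | hw'
  · obtain ⟨z, hz, hd⟩ := exists_eq_unit_mul_of_mul_conj_eq h.norm_eq hw' hc
    exact ⟨z, hz, Or.inl hd⟩
  · obtain ⟨z, hz, hd⟩ := exists_eq_unit_mul_of_mul_conj_eq (e := fun k => conj (c k))
      (by simpa only [norm_conj] using h.norm_eq) (by simpa only [map_mul, conj_conj] using hw')
      (by simpa only [Function.support, map_ne_zero] using hc)
    exact ⟨z, hz, Or.inr hd⟩

lemma PhaselessEquiv.refl (c : ℤ → ℂ) : PhaselessEquiv c c :=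
  ⟨fun _ => rfl, fun _ => rfl⟩

lemma PhaselessEquiv.unit_mul {z : ℂ} (hz : ‖z‖ = 1) (c : ℤ → ℂ) :
    PhaselessEquiv (fun k => z * c k) c :=
  (norm_sisFun_eq_iff _ _).mp fun t => by rw [sisFun_mul_left, norm_mul, hz, one_mul]

lemma PhaselessEquiv.unit_mul_conj {z : ℂ} (hz : ‖z‖ = 1) (c : ℤ → ℂ) :
    PhaselessEquiv (fun k => z * conj (c k)) c :=
  (norm_sisFun_eq_iff _ _).mp fun t => by
    rw [sisFun_mul_left, sisFun_conj, norm_mul, hz, one_mul, norm_conj]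

lemma PhaselessEquiv.piecewise {d₁ d₂ c : ℤ → ℂ} (h₁ : PhaselessEquiv d₁ c)
    (h₂ : PhaselessEquiv d₂ c) (k : ℤ)
    (hk : (d₁ k * conj (d₂ (k + 1))).re = (c k * conj (c (k + 1))).re) :
    PhaselessEquiv (fun j => if j ≤ k then d₁ j else d₂ j) c := by
  refine ⟨fun j => ?_, fun j => ?_⟩
  · split_ifs
    exacts [h₁.norm_eq j, h₂.norm_eq j]
  · rcases lt_trichotomy j k with hj | rfl | hj
    · rw [if_pos hj.le, if_pos (by omega)]
      exact h₁.re_mul_conj_eq j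
    · rw [if_pos le_rfl, if_neg (by omega)]
      exact hk
    · rw [if_neg (by omega), if_neg (by omega)]
      exact h₂.re_mul_conj_eq j

lemma im_mul_conj_eq_zero_of_eq_unit_mul_conj {z x y : ℂ} (hz : ‖z‖ = 1) (hx : x = z * conj x)
    (hy : y = z * conj y) : (x * conj y).im = 0 := by
  have hzz : z * conj z = 1 := by rw [mul_conj', hz]; norm_num
  have hyc : conj y = conj z * y := by simpa only [map_mul, conj_conj] using congrArg conj hy
  refine conj_eq_iff_im.mp ?_
  rw [map_mul, conj_conj]
  linear_combination -(x * hyc) - conj z * y * hx - conj x * y * hzz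

lemma IsConjPhaseRetrieval.ordConnected_support {c : ℤ → ℂ} (h : IsConjPhaseRetrieval c) :
    (Function.support c).OrdConnected := by
  rw [isConjPhaseRetrieval_iff] at h
  refine ⟨fun k₁ hk₁ k₂ hk₂ k ⟨hk₁k, hkk₂⟩ => by_contra fun hk => ?_⟩
  rw [Function.notMem_support] at hk
  have hkk₂' : ¬ k₂ ≤ k := fun h' => hk₂ (le_antisymm h' hkk₂ ▸ hk)
  -- The spliced sequence below is `z * c` only if `l = 1`, and `z * conj c` only if `l = μ`.
  set μ : ℂ := c k₁ * conj (c k₂) / (conj (c k₁) * c k₂)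
  obtain ⟨l, hl, hl₁, hlμ⟩ : ∃ l : ℂ, ‖l‖ = 1 ∧ l ≠ 1 ∧ l ≠ μ := by
    by_cases hμ : μ = -1
    · exact ⟨I, by simp, by simp [Complex.ext_iff], by rw [hμ]; simp [Complex.ext_iff]⟩
    · exact ⟨-1, by simp, by norm_num, Ne.symm hμ⟩
  obtain ⟨z, -, hd⟩ := h _ ((PhaselessEquiv.refl c).piecewise (PhaselessEquiv.unit_mul hl c) k
    (by rw [hk, zero_mul, zero_mul]))
  rcases hd with hd | hd
  · have h₁ := hd k₁
    have h₂ := hd k₂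
    simp only [if_pos hk₁k, if_neg hkk₂'] at h₁ h₂
    have hz : z = 1 := (mul_left_eq_self₀.mp h₁.symm).resolve_right hk₁
    exact hl₁ (by rw [mul_right_cancel₀ hk₂ h₂, hz])
  · have h₁ := hd k₁
    have h₂ := hd k₂
    simp only [if_pos hk₁k, if_neg hkk₂'] at h₁ h₂
    refine hlμ ?_
    have : conj (c k₁) * c k₂ ≠ 0 := mul_ne_zero ((map_ne_zero conj).mpr hk₁) hk₂
    rw [eq_div_iff this]
    linear_combination conj (c k₁) * h₂ - conj (c k₂) * h₁

lemma IsConjPhaseRetrieval.subsingleton_im_mul_conj_ne_zero {c : ℤ → ℂ}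
    (h : IsConjPhaseRetrieval c) : {k | (c k * conj (c (k + 1))).im ≠ 0}.Subsingleton := by
  rw [isConjPhaseRetrieval_iff] at h
  intro a ha b hb
  by_contra hab
  wlog hlt : a < b generalizing a b
  · exact this hb ha (Ne.symm hab) (lt_of_le_of_ne (not_lt.mp hlt) (Ne.symm hab))
  have hca₁ : c (a + 1) ≠ 0 := fun hca₁ => ha (by simp [hca₁])
  set l := c (a + 1) / conj (c (a + 1))
  have hl : ‖l‖ = 1 := by rw [norm_div, norm_conj, div_self (norm_ne_zero_iff.mpr hca₁)]
  have hla : l * conj (c (a + 1)) = c (a + 1) := div_mul_cancel₀ _ ((map_ne_zero conj).mpr hca₁)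
  obtain ⟨z, hz, hd⟩ := h _ ((PhaselessEquiv.refl c).piecewise (PhaselessEquiv.unit_mul_conj hl c)
    a (by rw [hla]))
  rcases hd with hd | hd
  · have h₀ := hd a
    have h₁ := hd b
    have h₂ := hd (b + 1)
    simp only [if_pos le_rfl, if_neg (show ¬ b ≤ a by omega),
      if_neg (show ¬ b + 1 ≤ a by omega)] at h₀ h₁ h₂
    have hca : c a ≠ 0 := fun hca => ha (by simp [hca])
    have hz : z = 1 := (mul_left_eq_self₀.mp h₀.symm).resolve_right hca
    rw [hz, one_mul] at h₁ h₂
    exact hb (im_mul_conj_eq_zero_of_eq_unit_mul_conj hl h₁.symm h₂.symm)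
  · have h₀ := hd a
    have h₁ := hd (a + 1)
    simp only [if_pos le_rfl, if_neg (show ¬ a + 1 ≤ a by omega)] at h₀ h₁
    exact ha (im_mul_conj_eq_zero_of_eq_unit_mul_conj hz h₀ (hla.symm.trans h₁))

lemma ordConnected_support_iff (c : ℤ → ℂ) : (Function.support c).OrdConnected ↔
    ∀ k₁ k₂ k : ℤ, k₁ ≤ k → k ≤ k₂ → c k₁ ≠ 0 → c k₂ ≠ 0 → c k ≠ 0 :=
  ⟨fun h k₁ k₂ k hk₁ hk₂ hc₁ hc₂ => h.out hc₁ hc₂ ⟨hk₁, hk₂⟩,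
    fun h => ⟨fun k₁ hc₁ k₂ hc₂ k hk => h k₁ k₂ k hk.1 hk.2 hc₁ hc₂⟩⟩

theorem stmt_8_general (c : ℤ → ℂ) :
    (∀ d : ℤ → ℂ,
        (∀ t : ℝ, ‖sisFun d t‖ = ‖sisFun c t‖) →
        ∃ z : ℂ, ‖z‖ = 1 ∧
          ((sisFun d = fun t => z * sisFun c t) ∨
            (sisFun d = fun t => z * (starRingEnd ℂ) (sisFun c t)))) ↔
      ((∀ k₁ k₂ k : ℤ, k₁ ≤ k → k ≤ k₂ → c k₁ ≠ 0 → c k₂ ≠ 0 → c k ≠ 0) ∧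
        {k : ℤ | (c k * (starRingEnd ℂ) (c (k + 1))).im ≠ 0}.Subsingleton) := by
  change IsConjPhaseRetrieval c ↔ _
  rw [← ordConnected_support_iff]
  refine ⟨fun h => ⟨h.ordConnected_support, h.subsingleton_im_mul_conj_ne_zero⟩, ?_⟩
  rintro ⟨hsupp, hphase⟩
  exact (isConjPhaseRetrieval_iff c).mpr fun d hd => hd.exists_eq_unit_mul_or hsupp hphase

/-- **Proposition 2.9.**  A nonzero `f = ∑_k c k · h(· - k) ∈ S_ℂ(h)` is complex
conjugate phase retrieval in `S_ℂ(h)` iff (i) the support of `c` is an interval of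
integers (i.e. `c k ≠ 0` for every `k` with `K₋ - 1 < k < K₊ + 1`), and (ii) there is at
most one integer `k` (then necessarily with `K₋ - 1 < k < K₊`) such that
`Im (c k * conj (c (k+1))) ≠ 0`. -/
theorem stmt_8 (c : ℤ → ℂ) (hc : sisFun c ≠ 0) :
    (∀ d : ℤ → ℂ,
        (∀ t : ℝ, ‖sisFun d t‖ = ‖sisFun c t‖) →
        ∃ z : ℂ, ‖z‖ = 1 ∧
          ((sisFun d = fun t => z * sisFun c t) ∨
            (sisFun d = fun t => z * (starRingEnd ℂ) (sisFun c t)))) ↔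
      ((∀ k₁ k₂ k : ℤ, k₁ ≤ k → k ≤ k₂ → c k₁ ≠ 0 → c k₂ ≠ 0 → c k ≠ 0) ∧
        {k : ℤ | (c k * (starRingEnd ℂ) (c (k + 1))).im ≠ 0}.Subsingleton) :=
  stmt_8_general c
end
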